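/- Let Ω be a Hausdorff space with Borel σ-algebra 𝓕, μ a regular finite measure on 𝓕, and f : Ω → ℝ a bounded Borel measurable function. Then there exists a sequence (fⁿ) of bounded upper semicontinuous functions with fⁿ ≤ f and ⟨fⁿ, μ⟩ ↑ ⟨f, μ⟩. Consequently, for every increasing functional φ : B_b → ℝ ∪ {+∞} on the space B_b of bounded Borel measurable functions, one has φ*_{U_b}(μ) = φ*_{B_b}(μ), where U_b is the space of bounded upper semicontinuous functions. -/

import Mathlib

open MeasureTheory Filter Topology Set

variable {Ω : Type*} [TopologicalSpace Ω] [MeasurableSpace Ω] [BorelSpace Ω]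

/-- Bounded Borel measurable real-valued functions. -/
def Bb (Ω : Type*) [TopologicalSpace Ω] [MeasurableSpace Ω] : Set (Ω → ℝ) :=
  {f | Measurable f ∧ ∃ M : ℝ, ∀ ω, |f ω| ≤ M}

/-- Bounded upper semicontinuous real-valued functions. -/
def Ub (Ω : Type*) [TopologicalSpace Ω] : Set (Ω → ℝ) :=
  {f | UpperSemicontinuous f ∧ ∃ M : ℝ, ∀ ω, |f ω| ≤ M}

/-- Regularity: inner regularity by closed compact sets on all Borel sets. -/
def PaperRegular {α : Type*} [TopologicalSpace α] [MeasurableSpace α] (μ : Measure α) :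
    Prop :=
  ∀ A : Set α, MeasurableSet A →
    μ A = ⨆ B ∈ {B : Set α | MeasurableSet B ∧ IsClosed B ∧ IsCompact B ∧ B ⊆ A}, μ B

/-- The convex conjugate of φ restricted to a class S of functions. -/
noncomputable def conjOn (S : Set (Ω → ℝ)) (φ : (Ω → ℝ) → EReal) (μ : Measure Ω) : EReal :=
  ⨆ f ∈ S, ((∫ ω, f ω ∂μ : ℝ) : EReal) - φ f

/-!
Inner regularity by compact sets makes `μ` weakly regular, so the Vitali–Carathéodory theorem
gives, for every `ε > 0`, an upper semicontinuous minorant of `f` whose integral is `ε`-close to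
that of `f`; the running maxima of these minorants (for `ε = 1/(n+1)`) form the required sequence.
For increasing `φ` and such a sequence `fⁿ ≤ g`, the terms `⟨fⁿ, μ⟩ - φ(fⁿ) ≥ ⟨fⁿ, μ⟩ - φ(g)`
of the supremum over `U_b` converge to `⟨g, μ⟩ - φ(g)`, which bounds every term of the
supremum over `B_b`.
-/

open scoped NNReal

lemma PaperRegular.weaklyRegular {X : Type*} [TopologicalSpace X] [MeasurableSpace X]
    [BorelSpace X] {μ : Measure X} [IsFiniteMeasure μ] (hμ : PaperRegular μ) :
    μ.WeaklyRegular := by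
  refine Measure.InnerRegularWRT.weaklyRegular_of_finite μ fun U hU r hr => ?_
  rw [hμ U hU.measurableSet] at hr
  simp only [lt_iSup_iff] at hr
  obtain ⟨B, ⟨-, hB, -, hBU⟩, hrB⟩ := hr
  exact ⟨B, hBU, hB, hrB⟩

lemma integrable_of_mem_Bb {X : Type*} [TopologicalSpace X] [MeasurableSpace X]
    {μ : Measure X} [IsFiniteMeasure μ] {f : X → ℝ} (hf : f ∈ Bb X) : Integrable f μ := by
  obtain ⟨hm, M, hM⟩ := hf
  exact ⟨hm.aestronglyMeasurable, .of_bounded (C := M) (ae_of_all _ hM)⟩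

lemma Ub_subset_Bb {X : Type*} [TopologicalSpace X] [MeasurableSpace X]
    [OpensMeasurableSpace X] : Ub X ⊆ Bb X :=
  fun _ ⟨hf, hbdd⟩ => ⟨hf.measurable, hbdd⟩

lemma sup_mem_Ub {X : Type*} [TopologicalSpace X] {f g : X → ℝ} (hf : f ∈ Ub X)
    (hg : g ∈ Ub X) : f ⊔ g ∈ Ub X := by
  obtain ⟨hf, M, hM⟩ := hf
  obtain ⟨hg, N, hN⟩ := hg
  exact ⟨hf.sup hg, max M N, fun x =>
    (abs_max_le_max_abs_abs).trans (max_le_max (hM x) (hN x))⟩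

lemma partialSups_mem_Ub {X : Type*} [TopologicalSpace X] {f : ℕ → X → ℝ}
    (hf : ∀ n, f n ∈ Ub X) (n : ℕ) : partialSups f n ∈ Ub X := by
  induction n with
  | zero => simpa using hf 0
  | succ n ih =>
    rw [← Order.succ_eq_add_one, partialSups_succ]
    exact sup_mem_Ub ih (hf _)

-- Vitali–Carathéodory, applied to the nonnegative function `f + M`.
lemma exists_mem_Ub_le_integral_le (μ : Measure Ω) [IsFiniteMeasure μ] [μ.WeaklyRegular]
    {f : Ω → ℝ} (hf : f ∈ Bb Ω) {ε : ℝ} (hε : 0 < ε) :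
    ∃ g ∈ Ub Ω, g ≤ f ∧ ∫ ω, f ω ∂μ - ε ≤ ∫ ω, g ω ∂μ := by
  have hf_int : Integrable f μ := integrable_of_mem_Bb hf
  obtain ⟨-, M, hM⟩ := hf
  have hfM : ∀ ω, 0 ≤ f ω + M := fun ω => by linarith [neg_abs_le (f ω), hM ω]
  let F : Ω → ℝ≥0 := fun ω => ⟨f ω + M, hfM ω⟩
  obtain ⟨g, hgF, hg, hg_int, hFg⟩ :=
    exists_upperSemicontinuous_le_integral_le F (hf_int.add (integrable_const M)) hε
  have hg_le : ∀ ω, (g ω : ℝ) - M ≤ f ω := fun ω => by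
    have : (g ω : ℝ) ≤ f ω + M := hgF ω
    linarith
  refine ⟨fun ω => (g ω : ℝ) - M, ⟨?_, M, fun ω => abs_le.2 ⟨?_, ?_⟩⟩, hg_le, ?_⟩
  · exact (NNReal.continuous_coe.comp_upperSemicontinuous hg NNReal.coe_mono).add
      upperSemicontinuous_const
  · linarith [(g ω).coe_nonneg]
  · linarith [hg_le ω, le_abs_self (f ω), hM ω]
  · have hF : ∫ ω, (F ω : ℝ) ∂μ = ∫ ω, f ω ∂μ + ∫ _, M ∂μ :=
      integral_add hf_int (integrable_const M)
    rw [integral_sub hg_int (integrable_const M)]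
    linarith

lemma exists_monotone_Ub_tendsto_integral (μ : Measure Ω) [IsFiniteMeasure μ]
    [μ.WeaklyRegular] {f : Ω → ℝ} (hf : f ∈ Bb Ω) :
    ∃ fn : ℕ → Ω → ℝ, (∀ n, fn n ∈ Ub Ω) ∧ (∀ n ω, fn n ω ≤ f ω) ∧
      Monotone (fun n => ∫ ω, fn n ω ∂μ) ∧
      Tendsto (fun n => ∫ ω, fn n ω ∂μ) atTop (𝓝 (∫ ω, f ω ∂μ)) := by
  choose g hg hgf hfg using fun n : ℕ =>
    exists_mem_Ub_le_integral_le μ hf (Nat.one_div_pos_of_nat (n := n))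
  have hUb : ∀ n, partialSups g n ∈ Ub Ω := partialSups_mem_Ub hg
  have hint : ∀ n, Integrable (partialSups g n) μ :=
    fun n => integrable_of_mem_Bb (Ub_subset_Bb (hUb n))
  have hle : ∀ n, partialSups g n ≤ f := fun n => partialSups_le g n f fun k _ => hgf k
  refine ⟨partialSups g, hUb, hle, fun m n hmn => ?_, ?_⟩
  · exact integral_mono (hint m) (hint n) (partialSups_monotone g hmn)
  · have hlower : Tendsto (fun n : ℕ => ∫ ω, f ω ∂μ - 1 / (n + 1)) atTop
        (𝓝 (∫ ω, f ω ∂μ)) := by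
      simpa using tendsto_const_nhds.sub (tendsto_one_div_add_atTop_nhds_zero_nat (𝕜 := ℝ))
    have hlower_le : ∀ n : ℕ, ∫ ω, f ω ∂μ - 1 / (n + 1) ≤ ∫ ω, partialSups g n ω ∂μ :=
      fun n => (hfg n).trans (integral_mono (integrable_of_mem_Bb (Ub_subset_Bb (hg n)))
        (hint n) (le_partialSups g n))
    exact tendsto_of_tendsto_of_tendsto_of_le_of_le hlower tendsto_const_nhds hlower_le
      fun n => integral_mono (hint n) (integrable_of_mem_Bb hf) (hle n)

lemma integral_sub_le_conjOn {X : Type*} [MeasurableSpace X] {S : Set (X → ℝ)}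
    {φ : (X → ℝ) → EReal} {μ : Measure X} {g : X → ℝ} {fn : ℕ → X → ℝ}
    (hfn : ∀ n, fn n ∈ S) (hφ : ∀ n, φ (fn n) ≤ φ g)
    (htendsto : Tendsto (fun n => ∫ ω, fn n ω ∂μ) atTop (𝓝 (∫ ω, g ω ∂μ))) :
    ((∫ ω, g ω ∂μ : ℝ) : EReal) - φ g ≤ conjOn S φ μ := by
  have hsub : Tendsto (fun n => ((∫ ω, fn n ω ∂μ : ℝ) : EReal) - φ g) atTop
      (𝓝 (((∫ ω, g ω ∂μ : ℝ) : EReal) - φ g)) :=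
    (EReal.continuousAt_add (.inl (EReal.coe_ne_top _))
      (.inl (EReal.coe_ne_bot _))).tendsto.comp
      ((EReal.tendsto_coe.2 htendsto).prodMk_nhds tendsto_const_nhds)
  exact le_of_tendsto' hsub fun n =>
    (EReal.sub_le_sub le_rfl (hφ n)).trans (le_iSup₂_of_le (fn n) (hfn n) le_rfl)

lemma conjOn_Ub_eq_conjOn_Bb (μ : Measure Ω) [IsFiniteMeasure μ] [μ.WeaklyRegular]
    {φ : (Ω → ℝ) → EReal} (hφ : ∀ g ∈ Bb Ω, ∀ h ∈ Bb Ω, (∀ ω, h ω ≤ g ω) → φ h ≤ φ g) :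
    conjOn (Ub Ω) φ μ = conjOn (Bb Ω) φ μ := by
  refine le_antisymm (biSup_mono fun _ hf => Ub_subset_Bb hf) (iSup₂_le fun g hg => ?_)
  obtain ⟨fn, hfn, hfn_le, -, htendsto⟩ := exists_monotone_Ub_tendsto_integral μ hg
  exact integral_sub_le_conjOn hfn (fun n => hφ g hg _ (Ub_subset_Bb (hfn n)) (hfn_le n))
    htendsto

theorem stmt17_general (μ : Measure Ω) (hfin : IsFiniteMeasure μ)
    (hreg : PaperRegular μ) (f : Ω → ℝ) (hf : f ∈ Bb Ω) :
    (∃ fn : ℕ → Ω → ℝ, (∀ n, fn n ∈ Ub Ω) ∧ (∀ n ω, fn n ω ≤ f ω) ∧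
      Monotone (fun n => ∫ ω, fn n ω ∂μ) ∧
      Tendsto (fun n => ∫ ω, fn n ω ∂μ) atTop (𝓝 (∫ ω, f ω ∂μ))) ∧
    (∀ φ : (Ω → ℝ) → EReal,
      (∀ g ∈ Bb Ω, ∀ h ∈ Bb Ω, (∀ ω, h ω ≤ g ω) → φ h ≤ φ g) →
      conjOn (Ub Ω) φ μ = conjOn (Bb Ω) φ μ) := by
  have := hreg.weaklyRegular
  exact ⟨exists_monotone_Ub_tendsto_integral μ hf, fun _ hφ => conjOn_Ub_eq_conjOn_Bb μ hφ⟩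

/-- Remark 1.9.2: for a regular finite Borel measure μ on a Hausdorff space and any bounded
Borel function f there is a sequence of bounded upper semicontinuous minorants whose
integrals increase to that of f; consequently φ*_{U_b}(μ) = φ*_{B_b}(μ) for every increasing
functional φ on B_b. -/
theorem stmt17 [T2Space Ω] (μ : Measure Ω) (hfin : IsFiniteMeasure μ)
    (hreg : PaperRegular μ) (f : Ω → ℝ) (hf : f ∈ Bb Ω) :
    (∃ fn : ℕ → Ω → ℝ, (∀ n, fn n ∈ Ub Ω) ∧ (∀ n ω, fn n ω ≤ f ω) ∧
      Monotone (fun n => ∫ ω, fn n ω ∂μ) ∧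
      Tendsto (fun n => ∫ ω, fn n ω ∂μ) atTop (𝓝 (∫ ω, f ω ∂μ))) ∧
    (∀ φ : (Ω → ℝ) → EReal,
      (∀ g ∈ Bb Ω, ∀ h ∈ Bb Ω, (∀ ω, h ω ≤ g ω) → φ h ≤ φ g) →
      conjOn (Ub Ω) φ μ = conjOn (Bb Ω) φ μ) :=
  stmt17_general μ hfin hreg f hf
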